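/- arXiv:1204.5767 — 6 statements merged into one kernel-verified Lean document; each statement's English description precedes it below -/
import Mathlib

section
/- Let X be a finite partially ordered set and let r ∈ ℂ. Then ∑_L r^{p(L)} · (1 − r)^{|X| − |L|} = 1, where the sum ranges over all lower sets L of X (subsets L ⊆ X such that y ≤ z and z ∈ L imply y ∈ L), p(L) denotes the number of maximal elements of L (elements m ∈ L such that there is no l ∈ L with m < l), and |·| denotes cardinality. (This is Theorem 6.1: the complex percolation transition amplitudes a(x→y) = m(x→y) r^p (1−r)^u sum to 1 over all causets y produced by x.) -/
/-!
Expand `1 = (r + (1 - r)) ^ |X|` as a sum of `r ^ |S| (1 - r) ^ (|X| - |S|)` over all subsets `S`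
of `X`, and group the subsets by their down-closure. The subsets whose down-closure is a given
lower set `L` are exactly those between the maximal elements of `L` and `L` itself, and summing
over such an interval of subsets leaves `r ^ p(L) (1 - r) ^ (|X| - |L|)`.
-/

open Finset

theorem Finset.sum_Icc_pow_mul_pow_sub {ι R : Type*} [DecidableEq ι] [CommSemiring R]
    {s t : Finset ι} {n : ℕ} (hst : s ⊆ t) (htn : #t ≤ n) (a b : R) :
    ∑ u ∈ Icc s t, a ^ #u * b ^ (n - #u) = a ^ #s * b ^ (n - #t) * (a + b) ^ (#t - #s) := by
  have hdisj : ∀ v ∈ (t \ s).powerset, Disjoint s v := fun v hv =>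
    disjoint_of_subset_right (mem_powerset.1 hv) disjoint_sdiff
  have hinj : Set.InjOn (s ∪ ·) ((t \ s).powerset : Set (Finset ι)) := fun v hv w hw h => by
    rw [← union_sdiff_cancel_left (hdisj v hv), ← union_sdiff_cancel_left (hdisj w hw)]
    exact congrArg (· \ s) h
  have hcard : #(t \ s) = #t - #s := card_sdiff_of_subset hst
  rw [Icc_eq_image_powerset hst, sum_image hinj, mul_assoc, ← hcard,
    ← sum_pow_mul_eq_add_pow a b (t \ s), mul_sum, mul_sum]
  refine Finset.sum_congr rfl fun v hv => ?_
  have hvt : #v ≤ #t - #s := by rw [← hcard]; exact card_le_card (mem_powerset.1 hv)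
  have hst' : #s ≤ #t := card_le_card hst
  rw [card_union_of_disjoint (hdisj v hv), hcard, pow_add,
    show n - (#s + #v) = (n - #t) + (#t - #s - #v) by omega, pow_add]
  ring

section DownClosure

variable {α : Type*} [PartialOrder α] [Fintype α] [DecidableLE α]

def downClosure (s : Finset α) : Finset α := {a | ∃ b ∈ s, a ≤ b}

variable {s L : Finset α}

theorem mem_downClosure {a : α} : a ∈ downClosure s ↔ ∃ b ∈ s, a ≤ b := by
  simp [downClosure]

variable (α) in
def lowerFinsets [DecidableEq α] : Finset (Finset α) :=
  univ.filter fun L => ∀ y z : α, z ∈ L → y ≤ z → y ∈ L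

theorem mem_lowerFinsets [DecidableEq α] :
    L ∈ lowerFinsets α ↔ ∀ y z : α, z ∈ L → y ≤ z → y ∈ L := by
  simp [lowerFinsets]

theorem downClosure_mem_lowerFinsets [DecidableEq α] (s : Finset α) :
    downClosure s ∈ lowerFinsets α := by
  refine mem_lowerFinsets.2 fun y z hz hyz => ?_
  obtain ⟨b, hb, hzb⟩ := mem_downClosure.1 hz
  exact mem_downClosure.2 ⟨b, hb, hyz.trans hzb⟩

theorem downClosure_eq_iff [DecidableEq α] [DecidableLT α] (hL : L ∈ lowerFinsets α) :
    downClosure s = L ↔ s ∈ Icc {m ∈ L | ∀ l ∈ L, ¬ m < l} L := by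
  rw [mem_Icc]
  constructor
  · rintro rfl
    refine ⟨fun m hm => ?_, fun b hb => mem_downClosure.2 ⟨b, hb, le_rfl⟩⟩
    obtain ⟨hm, hmax⟩ := mem_filter.1 hm
    obtain ⟨b, hb, hmb⟩ := mem_downClosure.1 hm
    obtain rfl | hlt := hmb.eq_or_lt
    · exact hb
    · exact absurd hlt (hmax b (mem_downClosure.2 ⟨b, hb, le_rfl⟩))
  · rintro ⟨hmax, hsL⟩
    ext a
    refine ⟨fun ha => ?_, fun ha => ?_⟩
    · obtain ⟨b, hb, hab⟩ := mem_downClosure.1 ha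
      exact (mem_lowerFinsets.1 hL) a b (hsL hb) hab
    · obtain ⟨m, ham, hm⟩ := L.exists_le_maximal ha
      have hm' : m ∈ {m ∈ L | ∀ l ∈ L, ¬ m < l} :=
        mem_filter.2 ⟨hm.1, fun l hl hlt => hlt.not_ge (hm.2 hl hlt.le)⟩
      exact mem_downClosure.2 ⟨m, hmax hm', ham⟩

theorem sum_lowerFinsets_pow_maximals_mul_pow [DecidableEq α] [DecidableLT α]
    {R : Type*} [CommSemiring R] (a b : R) :
    ∑ L ∈ lowerFinsets α,
      a ^ #{m ∈ L | ∀ l ∈ L, ¬ m < l} * b ^ (Fintype.card α - #L) *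
        (a + b) ^ (#L - #{m ∈ L | ∀ l ∈ L, ¬ m < l}) = (a + b) ^ Fintype.card α := by
  rw [← Fintype.sum_pow_mul_eq_add_pow α a b,
    ← sum_fiberwise_of_maps_to (s := univ) fun s _ => downClosure_mem_lowerFinsets s]
  refine Finset.sum_congr rfl fun L hL => ?_
  rw [← sum_Icc_pow_mul_pow_sub (filter_subset _ L) (card_le_univ L)]
  refine Finset.sum_congr ?_ fun _ _ => rfl
  ext s
  simp [downClosure_eq_iff hL]

end DownClosure

/-- **Theorem 6.1** (complex percolation amplitudes sum to one).
For a finite poset `X` and `r ∈ ℂ`, the sum over all lower sets `L` of `X` of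
`r ^ p(L) * (1 - r) ^ (|X| - |L|)` equals `1`, where `p(L)` is the number of
maximal elements of `L`. -/
theorem stmt0 {X : Type*} [Fintype X] [PartialOrder X] [DecidableEq X]
    [DecidableRel ((· ≤ ·) : X → X → Prop)] [DecidableRel ((· < ·) : X → X → Prop)]
    (r : ℂ) :
    ∑ L ∈ Finset.univ.filter
        (fun L : Finset X => ∀ y z : X, z ∈ L → y ≤ z → y ∈ L),
      r ^ (L.filter (fun m => ∀ l ∈ L, ¬ m < l)).card *
        (1 - r) ^ (Fintype.card X - L.card) = 1 := by
  have h := sum_lowerFinsets_pow_maximals_mul_pow (α := X) r (1 - r)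
  simp only [add_sub_cancel, one_pow, mul_one] at h
  exact h
end

section
/- For every n ≥ 1, the sum of the amplitudes of all n-paths equals one: ∑_{ω ∈ Ω_n} a_n(ω) = 1. (This is equation (5.3), the key step in proving that an amplitude process is a quantum sequential growth process.) -/
variable {V : Type*} [Fintype V] [DecidableEq V]

/-- An `n`-path: `ω 0 = v₀` and each entry is a successor of the previous one. -/
def IsPath (v₀ : V) (succ : V → Finset V) (n : ℕ) (ω : Fin n → V) : Prop :=
  (∀ i : Fin n, (i : ℕ) = 0 → ω i = v₀) ∧
    ∀ i j : Fin n, (j : ℕ) = (i : ℕ) + 1 → ω j ∈ succ (ω i)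

instance (v₀ : V) (succ : V → Finset V) (n : ℕ) :
    DecidablePred (IsPath v₀ succ n) := fun ω => by
  unfold IsPath; infer_instance

/-- `Ω_n`, the finite set of `n`-paths. -/
def pathSet (v₀ : V) (succ : V → Finset V) (n : ℕ) : Finset (Fin n → V) :=
  Finset.univ.filter (IsPath v₀ succ n)

/-- The amplitude `a_n(ω) = ∏_{k=0}^{n-2} a (ω k) (ω (k+1))`. -/
noncomputable def amp (a : V → V → ℂ) (n : ℕ) (ω : Fin n → V) : ℂ :=
  ∏ k : Fin (n - 1),
    a (ω ⟨k.1, by have := k.2; omega⟩) (ω ⟨k.1 + 1, by have := k.2; omega⟩)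

/-! Every `(n + 2)`-path is obtained exactly once by appending some `y ∈ succ x` to an
`(n + 1)`-path ending at `x`, and this multiplies its amplitude by `a x y`. Summing over `y`
therefore contributes the factor `∑ y ∈ succ x, a x y = 1`, so the total amplitude does not
depend on the length. -/

theorem mem_pathSet_succ_iff {v₀ : V} {succ : V → Finset V} {n : ℕ} {ω : Fin (n + 1) → V} :
    ω ∈ pathSet v₀ succ (n + 1) ↔ ω 0 = v₀ ∧ ∀ i : Fin n, ω i.succ ∈ succ (ω i.castSucc) := by
  rw [pathSet, Finset.mem_filter, and_iff_right (Finset.mem_univ ω)]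
  refine ⟨fun h => ⟨h.1 0 rfl, fun i => h.2 i.castSucc i.succ rfl⟩, fun ⟨h0, hs⟩ => ⟨?_, ?_⟩⟩
  · intro i hi
    rwa [show i = 0 from Fin.ext hi]
  · intro i j hj
    have hi : i ≠ Fin.last n := by
      rintro rfl
      exact absurd j.2 (by simp [hj])
    obtain ⟨k, rfl⟩ := Fin.exists_castSucc_eq.2 hi
    obtain rfl : j = k.succ := Fin.ext hj
    exact hs k

theorem snoc_mem_pathSet_iff {v₀ : V} {succ : V → Finset V} {n : ℕ} {τ : Fin (n + 1) → V}
    {y : V} :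
    Fin.snoc τ y ∈ pathSet v₀ succ (n + 2) ↔
      τ ∈ pathSet v₀ succ (n + 1) ∧ y ∈ succ (τ (Fin.last n)) := by
  rw [mem_pathSet_succ_iff, mem_pathSet_succ_iff, Fin.forall_fin_succ']
  simp only [Fin.succ_castSucc, Fin.snoc_castSucc, Fin.succ_last, Fin.snoc_last,
    ← Fin.castSucc_zero]
  tauto

theorem pathSet_zero (v₀ : V) (succ : V → Finset V) : pathSet v₀ succ 0 = Finset.univ := by
  ext ω
  simp [pathSet, IsPath]

theorem pathSet_one (v₀ : V) (succ : V → Finset V) : pathSet v₀ succ 1 = {fun _ => v₀} := by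
  ext ω
  simp [mem_pathSet_succ_iff, funext_iff, Fin.forall_fin_one]

theorem sum_pathSet_succ_succ {M : Type*} [AddCommMonoid M] (v₀ : V) (succ : V → Finset V)
    (n : ℕ) (f : (Fin (n + 2) → V) → M) :
    ∑ ω ∈ pathSet v₀ succ (n + 2), f ω =
      ∑ τ ∈ pathSet v₀ succ (n + 1), ∑ y ∈ succ (τ (Fin.last n)), f (Fin.snoc τ y) := by
  rw [Finset.sum_sigma']
  refine Finset.sum_nbij' (fun ω => ⟨Fin.init ω, ω (Fin.last _)⟩) (fun p => Fin.snoc p.1 p.2)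
    (fun ω hω => ?_) (fun p hp => ?_) (fun ω _ => Fin.snoc_init_self ω) (fun p _ => ?_)
    (fun ω _ => by rw [Fin.snoc_init_self])
  · rw [← Fin.snoc_init_self ω, snoc_mem_pathSet_iff] at hω
    simpa using hω
  · simpa [snoc_mem_pathSet_iff] using hp
  · simp [Fin.init_snoc]

section

omit [Fintype V] [DecidableEq V]

theorem amp_succ (a : V → V → ℂ) (n : ℕ) (ω : Fin (n + 1) → V) :
    amp a (n + 1) ω = ∏ i : Fin n, a (ω i.castSucc) (ω i.succ) := rfl

theorem amp_snoc (a : V → V → ℂ) (n : ℕ) (τ : Fin (n + 1) → V) (y : V) :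
    amp a (n + 2) (Fin.snoc τ y) = amp a (n + 1) τ * a (τ (Fin.last n)) y := by
  rw [amp_succ, Fin.prod_univ_castSucc]
  simp only [Fin.succ_castSucc, Fin.snoc_castSucc, Fin.succ_last, Fin.snoc_last, amp_succ]

end

theorem stmt1_general (v₀ : V) (succ : V → Finset V) (a : V → V → ℂ)
    (ha : ∀ x : V, ∑ y ∈ succ x, a x y = 1) (n : ℕ) :
    ∑ ω ∈ pathSet v₀ succ n, amp a n ω = 1 := by
  induction n using Nat.twoStepInduction with
  | zero => simp [pathSet_zero, amp]
  | one => simp [pathSet_one, amp]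
  | more n _ ih =>
    simp_rw [sum_pathSet_succ_succ, amp_snoc, ← Finset.mul_sum, ha, mul_one]
    exact ih

/-- **Equation (5.3)**: the amplitudes of all `n`-paths sum to one. -/
theorem stmt1 (v₀ : V) (succ : V → Finset V) (a : V → V → ℂ)
    (ha : ∀ x : V, ∑ y ∈ succ x, a x y = 1) (n : ℕ) (hn : 1 ≤ n) :
    ∑ ω ∈ pathSet v₀ succ n, amp a n ω = 1 :=
  stmt1_general v₀ succ a ha n
end

section
/- A linear map Λ : (Q × Q → ℂ) → (Q × Q → ℂ) satisfies both (i) for every g : Q → ℂ and all x, y ∈ Q, Λ(fun (x,y) ↦ g x)(x,y) = Δ_{σ,S} g (x) · 𝟙_T(y) and Λ(fun (x,y) ↦ g y)(x,y) = Δ_{τ,T} g (y) · 𝟙_S(x), and (ii) the Leibniz rule Λ(f·g)(x,y) = f(x,y) · Λg(x,y) + g(σ x, τ y) · Λf(x,y) for all f, g : Q × Q → ℂ and all x, y ∈ Q, if and only if Λ is the bidifference operator: Λf(x,y) = (f(x,y) − f(σ x, τ y)) · 𝟙_S(x) · 𝟙_T(y) for all f, x, y. (This is Theorem 4.1, characterizing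 the bidifference operator Δ_{ω,ω'}^n.) -/
/-- The difference operator `Δ_{σ,S} g (x) = (g x − g (σ x)) ⬝ 𝟙_S(x)`. -/
noncomputable def diffOp {Q : Type*} (σ : Q → Q) (S : Set Q)
    (g : Q → ℂ) (x : Q) : ℂ :=
  (g x - g (σ x)) * S.indicator 1 x

/-- The bidifference operator
`Δ f (x,y) = (f(x,y) − f(σ x, τ y)) ⬝ 𝟙_S(x) ⬝ 𝟙_T(y)`. -/
noncomputable def bidiffOp {Q : Type*} (σ τ : Q → Q) (S T : Set Q)
    (f : Q × Q → ℂ) (p : Q × Q) : ℂ :=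
  (f p - f (σ p.1, τ p.2)) * S.indicator 1 p.1 * T.indicator 1 p.2

/-!
Both `Λ` and the bidifference operator are linear, agree on functions of one
coordinate by (i), and obey the same twisted Leibniz rule (ii). Hence they agree
on every product `u(x) ⬝ v(y)`, in particular on the point masses
`𝟙_{(a,b)} = 𝟙_a(x) ⬝ 𝟙_b(y)`, which form a basis of `Q × Q → ℂ` as `Q` is finite.
-/

theorem Pi.single_one_prod {M α β : Type*} [MulZeroOneClass M] [DecidableEq α] [DecidableEq β]
    (a : α) (b : β) :
    (Pi.single (a, b) 1 : α × β → M) = (fun p : α × β => (Pi.single a 1 : α → M) p.1) *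
      (fun p : α × β => (Pi.single b 1 : β → M) p.2) := by
  ext ⟨x, y⟩
  by_cases hx : x = a <;> by_cases hy : y = b <;> simp [Pi.single_apply, hx, hy]

section TwistedLeibniz

variable {R : Type*} [Semiring R]

def TwistedLeibniz {P : Type*} (φ : P → P) (Λ : (P → R) →ₗ[R] (P → R)) : Prop :=
  ∀ f g : P → R, ∀ p, Λ (f * g) p = f p * Λ g p + g (φ p) * Λ f p

theorem TwistedLeibniz.ext_of_fst_snd {α β : Type*} [Finite α] [Finite β]
    {φ : α × β → α × β} {Λ Λ' : (α × β → R) →ₗ[R] (α × β → R)}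
    (hΛ : TwistedLeibniz φ Λ) (hΛ' : TwistedLeibniz φ Λ')
    (hfst : ∀ g : α → R, Λ (fun p => g p.1) = Λ' (fun p => g p.1))
    (hsnd : ∀ g : β → R, Λ (fun p => g p.2) = Λ' (fun p => g p.2)) :
    Λ = Λ' := by
  classical
  refine (Pi.basisFun R (α × β)).ext fun ⟨a, b⟩ => funext fun p => ?_
  rw [Pi.basisFun_apply, Pi.single_one_prod, hΛ, hΛ', hfst, hsnd]

end TwistedLeibniz

section BidiffOp

variable {Q : Type*} (σ τ : Q → Q) (S T : Set Q)

noncomputable def bidiffOpₗ : (Q × Q → ℂ) →ₗ[ℂ] (Q × Q → ℂ) where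
  toFun := bidiffOp σ τ S T
  map_add' f g := by funext p; simp only [bidiffOp, Pi.add_apply]; ring
  map_smul' c f := by
    funext p; simp only [bidiffOp, Pi.smul_apply, smul_eq_mul, RingHom.id_apply]; ring

theorem bidiffOpₗ_apply (f : Q × Q → ℂ) :
    bidiffOpₗ σ τ S T f = bidiffOp σ τ S T f := rfl

theorem bidiffOp_fst (g : Q → ℂ) (x y : Q) :
    bidiffOp σ τ S T (fun p => g p.1) (x, y) = diffOp σ S g x * T.indicator 1 y := rfl

theorem bidiffOp_snd (g : Q → ℂ) (x y : Q) :
    bidiffOp σ τ S T (fun p => g p.2) (x, y) = diffOp τ T g y * S.indicator 1 x :=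
  mul_right_comm _ _ _

theorem twistedLeibniz_bidiffOpₗ : TwistedLeibniz (Prod.map σ τ) (bidiffOpₗ σ τ S T) := by
  intro f g p
  simp only [bidiffOpₗ_apply, bidiffOp, Pi.mul_apply, Prod.map]
  ring

end BidiffOp

/-- **Theorem 4.1**: a linear map `Λ` on `Q × Q → ℂ` satisfies (i) the
compatibility conditions with the one-variable difference operators and (ii)
the Leibniz rule iff `Λ` is the bidifference operator. -/
theorem stmt4 {Q : Type*} [Fintype Q] (σ τ : Q → Q) (S T : Set Q)
    (Λ : (Q × Q → ℂ) →ₗ[ℂ] (Q × Q → ℂ)) :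
    ((∀ g : Q → ℂ, ∀ x y : Q,
        Λ (fun p => g p.1) (x, y) = diffOp σ S g x * T.indicator 1 y ∧
        Λ (fun p => g p.2) (x, y) = diffOp τ T g y * S.indicator 1 x) ∧
      (∀ f g : Q × Q → ℂ, ∀ x y : Q,
        Λ (f * g) (x, y) = f (x, y) * Λ g (x, y) + g (σ x, τ y) * Λ f (x, y))) ↔
    ∀ f : Q × Q → ℂ, ∀ p : Q × Q, Λ f p = bidiffOp σ τ S T f p := by
  constructor
  · rintro ⟨hcompat, hleibniz⟩ f p
    have hΛ : Λ = bidiffOpₗ σ τ S T :=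
      TwistedLeibniz.ext_of_fst_snd (fun f g p => hleibniz f g p.1 p.2)
        (twistedLeibniz_bidiffOpₗ σ τ S T)
        (fun g => funext fun ⟨x, y⟩ =>
          (hcompat g x y).1.trans (bidiffOp_fst σ τ S T g x y).symm)
        (fun g => funext fun ⟨x, y⟩ =>
          (hcompat g x y).2.trans (bidiffOp_snd σ τ S T g x y).symm)
    rw [hΛ, bidiffOpₗ_apply]
  · intro h
    obtain rfl : Λ = bidiffOpₗ σ τ S T := LinearMap.ext fun f => funext (h f)
    exact ⟨fun g x y => ⟨bidiffOp_fst σ τ S T g x y, bidiffOp_snd σ τ S T g x y⟩,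
      fun f g x y => twistedLeibniz_bidiffOpₗ σ τ S T f g (x, y)⟩
end

section
/- A linear map T : (Q → ℂ) → (Q → ℂ) satisfies the Leibniz rule T(f·g)(x) = f(x) · Tg(x) + g(σ x) · Tf(x) for all f, g : Q → ℂ and x ∈ Q, together with the vanishing condition Tf(x) = 0 whenever x ∉ S, if and only if there exists a function β : Q → ℂ such that Tf(x) = β(x) · Δ_{σ,S} f (x) for all f : Q → ℂ and x ∈ Q. (This is Theorem 4.2(a).) -/
/-!
Applying the Leibniz rule to the product `δₓ ⬝ f`, where `δₓ = Pi.single x 1`, and using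
`δₓ ⬝ f = f x • δₓ` together with linearity gives `f x ⬝ T δₓ x = T f x + f (σ x) ⬝ T δₓ x`.
So `T f x = β x ⬝ (f x - f (σ x))` with `β x = T δₓ x`, and the vanishing condition
supplies the indicator of `S`. Conversely, `Δ_{σ,S}` is itself a twisted derivation.
-/

theorem Pi.single_one_mul_eq_smul {Q R : Type*} [DecidableEq Q] [Semiring R]
    (x : Q) (f : Q → R) : Pi.single x 1 * f = f x • Pi.single x 1 := by
  ext y
  rcases eq_or_ne y x with rfl | hy <;> simp [*]

theorem LinearMap.apply_eq_mul_sub_of_leibniz {Q R : Type*} [DecidableEq Q] [CommRing R]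
    (σ : Q → Q) (T : (Q → R) →ₗ[R] (Q → R))
    (hT : ∀ f g : Q → R, ∀ x : Q, T (f * g) x = f x * T g x + g (σ x) * T f x)
    (f : Q → R) (x : Q) :
    T f x = T (Pi.single x 1) x * (f x - f (σ x)) := by
  have h := hT (Pi.single x 1) f x
  rw [Pi.single_one_mul_eq_smul, map_smul, Pi.smul_apply, smul_eq_mul, Pi.single_eq_same,
    one_mul] at h
  linear_combination -h

section diffOp

variable {Q : Type*} (σ : Q → Q) (S : Set Q)

theorem diffOp_of_mem {x : Q} (hx : x ∈ S) (g : Q → ℂ) :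
    diffOp σ S g x = g x - g (σ x) := by
  simp [diffOp, hx]

theorem diffOp_of_notMem {x : Q} (hx : x ∉ S) (g : Q → ℂ) : diffOp σ S g x = 0 := by
  simp [diffOp, hx]

theorem diffOp_mul (f g : Q → ℂ) (x : Q) :
    diffOp σ S (f * g) x = f x * diffOp σ S g x + g (σ x) * diffOp σ S f x := by
  simp only [diffOp, Pi.mul_apply]
  ring

end diffOp

theorem stmt5_general {Q : Type*} (σ : Q → Q) (S : Set Q)
    (T : (Q → ℂ) →ₗ[ℂ] (Q → ℂ)) :
    ((∀ f g : Q → ℂ, ∀ x : Q, T (f * g) x = f x * T g x + g (σ x) * T f x) ∧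
      (∀ f : Q → ℂ, ∀ x : Q, x ∉ S → T f x = 0)) ↔
    ∃ β : Q → ℂ, ∀ f : Q → ℂ, ∀ x : Q, T f x = β x * diffOp σ S f x := by
  classical
  constructor
  · rintro ⟨hLeibniz, hVanish⟩
    refine ⟨fun x => T (Pi.single x 1) x, fun f x => ?_⟩
    by_cases hx : x ∈ S
    · rw [diffOp_of_mem σ S hx, T.apply_eq_mul_sub_of_leibniz σ hLeibniz]
    · rw [diffOp_of_notMem σ S hx, hVanish f x hx, mul_zero]
  · rintro ⟨β, hβ⟩
    refine ⟨fun f g x => ?_, fun f x hx => ?_⟩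
    · simp only [hβ, diffOp_mul]
      ring
    · rw [hβ, diffOp_of_notMem σ S hx, mul_zero]

/-- **Theorem 4.2(a)**: a linear map `T` on `Q → ℂ` satisfies the Leibniz rule
`T(f⬝g)(x) = f(x) ⬝ Tg(x) + g(σ x) ⬝ Tf(x)` and vanishes off `S` iff
`T = β ⬝ Δ_{σ,S}` for some `β : Q → ℂ`. -/
theorem stmt5 {Q : Type*} [Fintype Q] (σ : Q → Q) (S : Set Q)
    (T : (Q → ℂ) →ₗ[ℂ] (Q → ℂ)) :
    ((∀ f g : Q → ℂ, ∀ x : Q, T (f * g) x = f x * T g x + g (σ x) * T f x) ∧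
      (∀ f : Q → ℂ, ∀ x : Q, x ∉ S → T f x = 0)) ↔
    ∃ β : Q → ℂ, ∀ f : Q → ℂ, ∀ x : Q, T f x = β x * diffOp σ S f x :=
  stmt5_general σ S T
end

section
/- A linear map T : (Q × Q → ℂ) → (Q × Q → ℂ) satisfies the Leibniz rule T(f·g)(x,y) = f(x,y) · Tg(x,y) + g(σ x, τ y) · Tf(x,y) for all f, g : Q × Q → ℂ and all x, y ∈ Q, together with the vanishing condition Tf(x,y) = 0 whenever x ∉ S or y ∉ T, if and only if there exists a function β : Q × Q → ℂ such that Tf(x,y) = β(x,y) · (f(x,y) − f(σ x, τ y)) · 𝟙_S(x) · 𝟙_T(y) for all f, x, y. (This is Theorem 4.2(b).) -/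
/-!
Evaluating `T` at a point `p = (x, y)` with `x ∈ S`, `y ∈ T'` gives a linear functional `φ` with
`φ (f * g) = f p * φ g + g q * φ f`, where `q = (σ x, τ y)`. If `p ≠ q`, computing `φ (δₚ * f)`
both ways with the delta function `δₚ` at `p` gives `φ f = φ δₚ * (f p - f q)`. If `p = q`, `φ`
is a point derivation, so it kills constants and every `g` with `g p = 0`, since such `g` factors
as `g * e` with `e p = 0`; hence `φ = 0`, which is again the formula.
-/

section TwistedPointDerivation

variable {X R : Type*} [CommRing R] {p q : X} {φ : (X → R) →ₗ[R] R}

theorem LinearMap.eq_zero_of_leibniz_at (hφ : ∀ f g, φ (f * g) = f p * φ g + g p * φ f)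
    (f : X → R) : φ f = 0 := by
  classical
  have h_one : φ 1 = 0 := by
    have h := hφ 1 1
    simp only [mul_one, Pi.one_apply, one_mul] at h
    linear_combination -h
  have h_vanish : ∀ g : X → R, g p = 0 → φ g = 0 := by
    intro g hg
    let e : X → R := fun x => if x = p then 0 else 1
    have hge : g * e = g := by
      funext x
      by_cases hx : x = p <;> simp [e, hx, hg]
    simpa [e, hg, hge] using hφ g e
  have hf : f = (f - f p • 1) + f p • 1 := by abel
  rw [hf, map_add, map_smul, h_vanish _ (by simp), h_one, smul_zero, add_zero]

theorem LinearMap.eq_single_mul_sub_of_leibniz_of_ne [DecidableEq X]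
    (hφ : ∀ f g, φ (f * g) = f p * φ g + g q * φ f) (hpq : p ≠ q) (f : X → R) :
    φ f = φ (Pi.single p 1) * (f p - f q) := by
  have h := hφ (Pi.single p 1) f
  rw [mul_comm, hφ f] at h
  simp only [Pi.single_eq_same, Pi.single_eq_of_ne' hpq, zero_mul, one_mul, add_zero] at h
  linear_combination -h

theorem LinearMap.eq_single_mul_sub_of_leibniz [DecidableEq X]
    (hφ : ∀ f g, φ (f * g) = f p * φ g + g q * φ f) (f : X → R) :
    φ f = φ (Pi.single p 1) * (f p - f q) := by
  by_cases hpq : p = q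
  · subst hpq
    simp [eq_zero_of_leibniz_at hφ]
  · exact eq_single_mul_sub_of_leibniz_of_ne hφ hpq f

end TwistedPointDerivation

theorem stmt6_general {Q : Type*} (σ τ : Q → Q) (S T' : Set Q)
    (T : (Q × Q → ℂ) →ₗ[ℂ] (Q × Q → ℂ)) :
    ((∀ f g : Q × Q → ℂ, ∀ x y : Q,
        T (f * g) (x, y) = f (x, y) * T g (x, y) + g (σ x, τ y) * T f (x, y)) ∧
      (∀ f : Q × Q → ℂ, ∀ x y : Q, x ∉ S ∨ y ∉ T' → T f (x, y) = 0)) ↔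
    ∃ β : Q × Q → ℂ, ∀ f : Q × Q → ℂ, ∀ x y : Q,
      T f (x, y) = β (x, y) * (f (x, y) - f (σ x, τ y)) *
        S.indicator 1 x * T'.indicator 1 y := by
  classical
  constructor
  · rintro ⟨h_leibniz, h_vanish⟩
    refine ⟨fun p => T (Pi.single p 1) p, fun f x y => ?_⟩
    by_cases hxy : x ∈ S ∧ y ∈ T'
    · simp only [Set.indicator_of_mem hxy.1, Set.indicator_of_mem hxy.2, Pi.one_apply, mul_one]
      exact (LinearMap.proj (x, y) ∘ₗ T).eq_single_mul_sub_of_leibniz (h_leibniz · · x y) f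
    · rw [h_vanish f x y (not_and_or.mp hxy)]
      rcases not_and_or.mp hxy with hx | hy
      · simp [Set.indicator_of_notMem hx]
      · simp [Set.indicator_of_notMem hy]
  · rintro ⟨β, hβ⟩
    refine ⟨fun f g x y => ?_, fun f x y h => ?_⟩
    · simp only [hβ, Pi.mul_apply]
      ring
    · rcases h with hx | hy
      · simp [hβ, Set.indicator_of_notMem hx]
      · simp [hβ, Set.indicator_of_notMem hy]

/-- **Theorem 4.2(b)**: a linear map `T` on `Q × Q → ℂ` satisfies the Leibniz
rule `T(f⬝g)(x,y) = f(x,y) ⬝ Tg(x,y) + g(σ x, τ y) ⬝ Tf(x,y)` and vanishes when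
`x ∉ S` or `y ∉ T'` iff there is `β : Q × Q → ℂ` with
`Tf(x,y) = β(x,y) ⬝ (f(x,y) − f(σ x, τ y)) ⬝ 𝟙_S(x) ⬝ 𝟙_{T'}(y)`. -/
theorem stmt6 {Q : Type*} [Fintype Q] (σ τ : Q → Q) (S T' : Set Q)
    (T : (Q × Q → ℂ) →ₗ[ℂ] (Q × Q → ℂ)) :
    ((∀ f g : Q × Q → ℂ, ∀ x y : Q,
        T (f * g) (x, y) = f (x, y) * T g (x, y) + g (σ x, τ y) * T f (x, y)) ∧
      (∀ f : Q × Q → ℂ, ∀ x y : Q, x ∉ S ∨ y ∉ T' → T f (x, y) = 0)) ↔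
    ∃ β : Q × Q → ℂ, ∀ f : Q × Q → ℂ, ∀ x y : Q,
      T f (x, y) = β (x, y) * (f (x, y) - f (σ x, τ y)) *
        S.indicator 1 x * T'.indicator 1 y :=
  stmt6_general σ τ S T' T
end

section
/- There exists a ∈ ℝ such that (Δ_ω ω̂)(ω k) = a · ω̂(ω k) for all k with 2 ≤ k ≤ n−1 (i.e., ω̂ is an eigenvector of the difference operator along the path, ω is a discrete geodesic) if and only if there exists c ∈ ℝ such that μc (ω k) (ω (k−1)) = c · μc (ω (k−1)) (ω (k−2)) for all k with 2 ≤ k ≤ n−1. (This is Theorem 4.3: an n-path ω is a discrete geodesic if and only if the conditional q-measures satisfy μ_n(x | ω_{|x|−1}) = c · μ_n(ω_{|x|−1} | ω_{|x|−2}) whenever ω_{|x|} = x with |x| ≥ 3.) -/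
/-!
Write `m k = μc (ω k) (ω (k - 1))`. Along the path `Δ_ω ω̂ (ω k) = m k - m (k - 1)`, so the
eigenvalue equation says `m (k - 1) = (1 - a) * m k`. Since every `m k` is nonzero, this
proportionality can be inverted, giving `m k = c * m (k - 1)` with `c = (1 - a)⁻¹`, and back with
`a = 1 - c⁻¹`.
-/

section ProportionalFamilies

variable {ι : Type*}

lemma exists_forall_sub_eq_mul_iff {R : Type*} [Ring R] {x y : ι → R} :
    (∃ a, ∀ i, x i - y i = a * x i) ↔ ∃ b, ∀ i, y i = b * x i := by
  constructor
  · rintro ⟨a, ha⟩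
    exact ⟨1 - a, fun i => by rw [sub_mul, one_mul, ← ha i, sub_sub_cancel]⟩
  · rintro ⟨b, hb⟩
    exact ⟨1 - b, fun i => by rw [sub_mul, one_mul, ← hb i]⟩

lemma exists_forall_eq_mul_symm {G₀ : Type*} [GroupWithZero G₀] {x y : ι → G₀}
    (hy : ∀ i, y i ≠ 0) : (∃ b, ∀ i, y i = b * x i) → ∃ c, ∀ i, x i = c * y i := by
  rintro ⟨b, hb⟩
  refine ⟨b⁻¹, fun i => ?_⟩
  have hb0 : b ≠ 0 := left_ne_zero_of_mul (hb i ▸ hy i)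
  rw [hb i, inv_mul_cancel_left₀ hb0]

lemma exists_forall_eq_mul_comm {G₀ : Type*} [GroupWithZero G₀] {x y : ι → G₀}
    (hx : ∀ i, x i ≠ 0) (hy : ∀ i, y i ≠ 0) :
    (∃ b, ∀ i, y i = b * x i) ↔ ∃ c, ∀ i, x i = c * y i :=
  ⟨exists_forall_eq_mul_symm hy, exists_forall_eq_mul_symm hx⟩

end ProportionalFamilies

/-- **Theorem 4.3**: an `n`-path `ω` is a discrete geodesic (`ω̂` is an
eigenvector of the difference operator `Δ_ω` along the path) iff there is a
`c ∈ ℝ` with `μ_n(ω k | ω (k−1)) = c ⬝ μ_n(ω (k−1) | ω (k−2))` for all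
`2 ≤ k ≤ n−1`. Here `ω̂` and `Δ_ω` are given by their defining properties. -/
theorem stmt7 {Q : Type*} (n : ℕ)
    (ω : Fin n → Q) (μc : Q → Q → ℝ)
    (hμ : ∀ k, ∀ h1 : 1 ≤ k, ∀ h2 : k ≤ n - 1,
      μc (ω ⟨k, by omega⟩) (ω ⟨k - 1, by omega⟩) ≠ 0)
    (ωhat : Q → ℝ)
    (hωhat : ∀ k, ∀ h1 : 1 ≤ k, ∀ h2 : k ≤ n - 1,
      ωhat (ω ⟨k, by omega⟩) = μc (ω ⟨k, by omega⟩) (ω ⟨k - 1, by omega⟩))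
    (Δ : (Q → ℝ) → Q → ℝ)
    (hΔ : ∀ f : Q → ℝ, ∀ k, ∀ h1 : 1 ≤ k, ∀ h2 : k ≤ n - 1,
      Δ f (ω ⟨k, by omega⟩) = f (ω ⟨k, by omega⟩) - f (ω ⟨k - 1, by omega⟩)) :
    (∃ a : ℝ, ∀ k, ∀ h1 : 2 ≤ k, ∀ h2 : k ≤ n - 1,
      Δ ωhat (ω ⟨k, by omega⟩) = a * ωhat (ω ⟨k, by omega⟩)) ↔
    (∃ c : ℝ, ∀ k, ∀ h1 : 2 ≤ k, ∀ h2 : k ≤ n - 1,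
      μc (ω ⟨k, by omega⟩) (ω ⟨k - 1, by omega⟩) =
        c * μc (ω ⟨k - 1, by omega⟩) (ω ⟨k - 2, by omega⟩)) := by
  let x : {k : ℕ // 2 ≤ k ∧ k ≤ n - 1} → ℝ := fun k =>
    μc (ω ⟨k, by omega⟩) (ω ⟨k - 1, by omega⟩)
  let y : {k : ℕ // 2 ≤ k ∧ k ≤ n - 1} → ℝ := fun k =>
    μc (ω ⟨k - 1, by omega⟩) (ω ⟨k - 2, by omega⟩)
  have hx : ∀ k, x k ≠ 0 := fun k => hμ k (by omega) k.2.2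
  have hy : ∀ k, y k ≠ 0 := fun k => hμ (k - 1) (by omega) (by omega)
  have hΔωhat : ∀ k (h1 : 2 ≤ k) (h2 : k ≤ n - 1),
      Δ ωhat (ω ⟨k, by omega⟩) = x ⟨k, h1, h2⟩ - y ⟨k, h1, h2⟩ := fun k h1 h2 => by
    rw [hΔ ωhat k (by omega) h2, hωhat k (by omega) h2, hωhat (k - 1) (by omega) (by omega)]
    -- `k - 1 - 1` and `k - 2` agree definitionally
    rfl
  have hωhatx : ∀ k (h1 : 2 ≤ k) (h2 : k ≤ n - 1), ωhat (ω ⟨k, by omega⟩) = x ⟨k, h1, h2⟩ :=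
    fun k h1 h2 => hωhat k (by omega) h2
  have hratio := exists_forall_sub_eq_mul_iff.trans (exists_forall_eq_mul_comm hx hy)
  simp only [Subtype.forall, forall_and_index] at hratio
  refine (exists_congr fun a => ?_).trans hratio
  exact forall_congr' fun k => forall_congr' fun h1 => forall_congr' fun h2 => by
    rw [hΔωhat k h1 h2, hωhatx k h1 h2]
end
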